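/- arXiv:1306.4838 — 3 statements merged into one kernel-verified Lean document; each statement's English description precedes it below -/
import Mathlib

section
/- The image of the centralizer M_n^{X_λ} = {Y ∈ M_n(K) : YX_λ = X_λY} under the map pr_ext sending Y to the extracted d×d matrix Y_ext = (Y^{i,i'}_{1,1})_{1 ≤ i,i' ≤ d} is exactly the parabolic subalgebra {Z ∈ M_d(K) : Z_{i,i'} = 0 whenever λ_i < λ_{i'}}, i.e. the set of Z ∈ M_d(K) stabilizing each subspace W_ℓ = span{ε_i : λ_i ≥ ℓ} (ε_1,…,ε_d the standard basis of K^d, ℓ ≥ 1). -/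
/-!
Comparing `Y X_λ = X_λ Y` at the entry `(f^i_j, f^{i'}_{j+1})` gives
`Y^{i,i'}_{j,j} = Y^{i,i'}_{j+1,j+1}`, and the right side is `0` when `j = λ_i < λ_{i'}`;
so by downward induction `Y^{i,i'}_{1,1} = 0` whenever `λ_i < λ_{i'}`. Conversely, a matrix `Z`
with `Z_{i,i'} = 0` for `λ_i < λ_{i'}` lifts to the centralizer as the matrix whose `(i,i')` block
is `Z_{i,i'} δ_{j,j'}`.
-/

/-- The nilpotent Jordan matrix `X_λ` attached to a partition
`λ = (λ_1 ≥ … ≥ λ_d)`, in the basis `f^i_j` encoded by the sigma type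
`Σ i : Fin d, Fin (λ i)` (0-based): `X_λ f^i_j = f^i_{j-1}` for `j > 1` and
`X_λ f^i_1 = 0`. -/
def jordanMatrix (K : Type) [Field K] {d : ℕ} (lam : Fin d → ℕ) :
    Matrix (Σ i : Fin d, Fin (lam i)) (Σ i : Fin d, Fin (lam i)) K :=
  Matrix.of fun s t => if s.1 = t.1 ∧ (s.2 : ℕ) + 1 = (t.2 : ℕ) then 1 else 0

/-- The extracted `d × d` matrix `Y_ext = (Y^{i,i'}_{1,1})_{i,i'}`. -/
def prExt {K : Type} [Field K] {d : ℕ} (lam : Fin d → ℕ) (hpos : ∀ i, 1 ≤ lam i)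
    (Y : Matrix (Σ i : Fin d, Fin (lam i)) (Σ i : Fin d, Fin (lam i)) K) :
    Matrix (Fin d) (Fin d) K :=
  Matrix.of fun i i' => Y ⟨i, ⟨0, hpos i⟩⟩ ⟨i', ⟨0, hpos i'⟩⟩

section

variable {K : Type} [Field K] {d : ℕ} {lam : Fin d → ℕ}

theorem mul_jordanMatrix_apply (Y : Matrix (Σ i : Fin d, Fin (lam i)) (Σ i : Fin d, Fin (lam i)) K)
    (s t : Σ i : Fin d, Fin (lam i)) :
    (Y * jordanMatrix K lam) s t =
      if h : 0 < (t.2 : ℕ) then Y s ⟨t.1, ⟨(t.2 : ℕ) - 1, by omega⟩⟩ else 0 := by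
  obtain ⟨i', j'⟩ := t
  rw [Matrix.mul_apply]
  split_ifs with h <;> dsimp only at h
  · rw [Finset.sum_eq_single_of_mem ⟨i', ⟨(j' : ℕ) - 1, by omega⟩⟩ (Finset.mem_univ _)]
    · simp only [jordanMatrix, Matrix.of_apply, true_and]
      rw [if_pos (by omega), mul_one]
    · rintro ⟨i, j⟩ - hne
      simp only [jordanMatrix, Matrix.of_apply, mul_ite, mul_one, mul_zero, ite_eq_right_iff]
      rintro ⟨rfl, hj⟩
      refine absurd ?_ hne
      simp only [Sigma.mk.inj_iff, heq_eq_eq, Fin.ext_iff, true_and] at hj ⊢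
      omega
  · refine Finset.sum_eq_zero fun u _ => ?_
    simp only [jordanMatrix, Matrix.of_apply, mul_ite, mul_one, mul_zero, ite_eq_right_iff]
    omega

theorem jordanMatrix_mul_apply (Y : Matrix (Σ i : Fin d, Fin (lam i)) (Σ i : Fin d, Fin (lam i)) K)
    (s t : Σ i : Fin d, Fin (lam i)) :
    (jordanMatrix K lam * Y) s t =
      if h : (s.2 : ℕ) + 1 < lam s.1 then Y ⟨s.1, ⟨(s.2 : ℕ) + 1, h⟩⟩ t else 0 := by
  obtain ⟨i, j⟩ := s
  rw [Matrix.mul_apply]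
  split_ifs with h <;> dsimp only at h
  · rw [Finset.sum_eq_single_of_mem ⟨i, ⟨(j : ℕ) + 1, h⟩⟩ (Finset.mem_univ _)]
    · simp [jordanMatrix]
    · rintro ⟨i', j'⟩ - hne
      simp only [jordanMatrix, Matrix.of_apply, ite_mul, one_mul, zero_mul, ite_eq_right_iff]
      rintro ⟨rfl, hj⟩
      refine absurd ?_ hne
      simp only [Sigma.mk.inj_iff, heq_eq_eq, Fin.ext_iff, true_and] at hj ⊢
      omega
  · refine Finset.sum_eq_zero fun ⟨i', j'⟩ _ => ?_
    simp only [jordanMatrix, Matrix.of_apply, ite_mul, one_mul, zero_mul, ite_eq_right_iff]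
    rintro ⟨rfl, hj⟩
    have := j'.2
    omega

theorem apply_eq_zero_of_commute_jordanMatrix
    {Y : Matrix (Σ i : Fin d, Fin (lam i)) (Σ i : Fin d, Fin (lam i)) K}
    (hY : Y * jordanMatrix K lam = jordanMatrix K lam * Y) {i i' : Fin d} (hlt : lam i < lam i')
    (j : ℕ) (hj : j < lam i) : Y ⟨i, ⟨j, hj⟩⟩ ⟨i', ⟨j, hj.trans hlt⟩⟩ = 0 := by
  induction hk : lam i - 1 - j generalizing j with
  | zero =>
    have hentry := congr_fun₂ hY ⟨i, ⟨j, hj⟩⟩ ⟨i', ⟨j + 1, by omega⟩⟩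
    rw [mul_jordanMatrix_apply, jordanMatrix_mul_apply, dif_pos (by simp),
      dif_neg (by simp; omega)] at hentry
    exact hentry
  | succ k ih =>
    have hentry := congr_fun₂ hY ⟨i, ⟨j, hj⟩⟩ ⟨i', ⟨j + 1, by omega⟩⟩
    rw [mul_jordanMatrix_apply, jordanMatrix_mul_apply, dif_pos (by simp),
      dif_pos (by simp; omega)] at hentry
    exact hentry.trans (ih (j + 1) (by omega) (by omega))

def prExtLift (lam : Fin d → ℕ) (Z : Matrix (Fin d) (Fin d) K) :
    Matrix (Σ i : Fin d, Fin (lam i)) (Σ i : Fin d, Fin (lam i)) K :=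
  Matrix.of fun s t => if (s.2 : ℕ) = (t.2 : ℕ) then Z s.1 t.1 else 0

theorem prExt_prExtLift (hpos : ∀ i, 1 ≤ lam i) (Z : Matrix (Fin d) (Fin d) K) :
    prExt lam hpos (prExtLift lam Z) = Z := by
  ext i i'
  simp [prExt, prExtLift]

theorem prExtLift_commute_jordanMatrix {Z : Matrix (Fin d) (Fin d) K}
    (hZ : ∀ i i' : Fin d, lam i < lam i' → Z i i' = 0) :
    prExtLift lam Z * jordanMatrix K lam = jordanMatrix K lam * prExtLift lam Z := by
  ext ⟨i, j⟩ ⟨i', j'⟩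
  rw [mul_jordanMatrix_apply, jordanMatrix_mul_apply]
  simp only [prExtLift, Matrix.of_apply]
  split_ifs <;> first | rfl | omega | exact hZ i i' (by omega)

end

theorem prExt_image_centralizer_general
    {K : Type} [Field K] (d : ℕ) (lam : Fin d → ℕ)
    (hpos : ∀ i, 1 ≤ lam i) :
    {Z : Matrix (Fin d) (Fin d) K |
        ∃ Y : Matrix (Σ i : Fin d, Fin (lam i)) (Σ i : Fin d, Fin (lam i)) K,
          Y * jordanMatrix K lam = jordanMatrix K lam * Y ∧ Z = prExt lam hpos Y} =
      {Z : Matrix (Fin d) (Fin d) K | ∀ i i' : Fin d, lam i < lam i' → Z i i' = 0} := by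
  ext Z
  constructor
  · rintro ⟨Y, hY, rfl⟩ i i' hlt
    exact apply_eq_zero_of_commute_jordanMatrix hY hlt 0 (hpos i)
  · intro hZ
    exact ⟨prExtLift lam Z, prExtLift_commute_jordanMatrix hZ, (prExt_prExtLift hpos Z).symm⟩

/-- the image of the centralizer of `X_λ` under `pr_ext` is
exactly the parabolic subalgebra `{Z ∈ M_d(K) : Z_{i,i'} = 0 whenever
λ_i < λ_{i'}}` (the matrices stabilizing each `W_ℓ = span{ε_i : λ_i ≥ ℓ}`). -/
theorem prExt_image_centralizer
    {K : Type} [Field K] [IsAlgClosed K] (n d : ℕ) (lam : Fin d → ℕ)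
    (hpos : ∀ i, 1 ≤ lam i) (hanti : Antitone lam) (hsum : ∑ i, lam i = n) :
    {Z : Matrix (Fin d) (Fin d) K |
        ∃ Y : Matrix (Σ i : Fin d, Fin (lam i)) (Σ i : Fin d, Fin (lam i)) K,
          Y * jordanMatrix K lam = jordanMatrix K lam * Y ∧ Z = prExt lam hpos Y} =
      {Z : Matrix (Fin d) (Fin d) K | ∀ i i' : Fin d, lam i < lam i' → Z i i' = 0} :=
  prExt_image_centralizer_general d lam hpos
end

section
/- Let Y ∈ M_n(K) commute with the Jordan matrix X_λ. Then Y is nilpotent if and only if, for every ℓ ≥ 1 occurring as a part of λ, the extracted τ_ℓ×τ_ℓ matrix Y(ℓ) is nilpotent. -/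
/-- For `ℓ ≥ 1`, the extracted `τ_ℓ × τ_ℓ` matrix `Y(ℓ) = (Y^{i,i'}_{1,1})`
indexed by the pairs `(i,i')` with `λ_i = λ_{i'} = ℓ`. -/
def prBlock {K : Type} [Field K] {d : ℕ} (lam : Fin d → ℕ) (hpos : ∀ i, 1 ≤ lam i)
    (Y : Matrix (Σ i : Fin d, Fin (lam i)) (Σ i : Fin d, Fin (lam i)) K) (ℓ : ℕ) :
    Matrix {i : Fin d // lam i = ℓ} {i : Fin d // lam i = ℓ} K :=
  Matrix.of fun a b => Y ⟨a.1, ⟨0, hpos a.1⟩⟩ ⟨b.1, ⟨0, hpos b.1⟩⟩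

open Matrix Polynomial

namespace Matrix

variable {R n : Type*} [CommRing R] [Fintype n] [DecidableEq n]

theorem isNilpotent_iff_charpoly_eq_X_pow [IsDomain R] (M : Matrix n n R) :
    IsNilpotent M ↔ M.charpoly = X ^ Fintype.card n :=
  ⟨fun h => sub_eq_zero.mp (isNilpotent_charpoly_sub_pow_of_isNilpotent h).eq_zero,
    fun h => ⟨Fintype.card n, by simpa [h] using M.aeval_self_charpoly⟩⟩

theorem BlockTriangular.isNilpotent_iff [IsDomain R] {α : Type*} [LinearOrder α]
    {M : Matrix n n R} {b : n → α} (hM : M.BlockTriangular b) :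
    IsNilpotent M ↔ ∀ i, IsNilpotent (M.toSquareBlock b (b i)) := by
  rw [isNilpotent_iff_charpoly_eq_X_pow, hM.charpoly]
  constructor
  · intro h i
    have hdvd : (M.toSquareBlock b (b i)).charpoly ∣ X ^ Fintype.card n :=
      h ▸ Finset.dvd_prod_of_mem _ (Finset.mem_image_of_mem b (Finset.mem_univ i))
    exact ⟨_, by simpa using aeval_eq_zero_of_dvd_aeval_eq_zero hdvd (aeval_self_charpoly _)⟩
  · intro h
    have hblock : ∀ a ∈ Finset.univ.image b,
        (M.toSquareBlock b a).charpoly = X ^ (Finset.univ.filter (b · = a)).card := by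
      simp only [Finset.mem_image, Finset.mem_univ, true_and, forall_exists_index]
      rintro _ i rfl
      rw [(isNilpotent_iff_charpoly_eq_X_pow _).mp (h i), Fintype.card_subtype]
    rw [Finset.prod_congr rfl hblock, Finset.prod_pow_eq_pow_sum,
      ← Finset.card_eq_sum_card_image, Finset.card_univ]

end Matrix

section JordanCommutant

variable {K : Type} [Field K] {d : ℕ} {lam : Fin d → ℕ}
  (Y : Matrix (Σ i : Fin d, Fin (lam i)) (Σ i : Fin d, Fin (lam i)) K)

theorem mul_jordanMatrix_apply_succ (s : Σ i : Fin d, Fin (lam i)) (i : Fin d) (j : ℕ)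
    (hj : j + 1 < lam i) :
    (Y * jordanMatrix K lam) s ⟨i, ⟨j + 1, hj⟩⟩ = Y s ⟨i, ⟨j, by omega⟩⟩ := by
  rw [mul_apply, Fintype.sum_eq_single ⟨i, ⟨j, by omega⟩⟩]
  · simp [jordanMatrix]
  · rintro ⟨i', j'⟩ hne
    simp only [jordanMatrix, of_apply]
    rw [if_neg, mul_zero]
    rintro ⟨rfl, hj'⟩
    exact hne (Sigma.ext rfl (heq_of_eq (Fin.ext (Nat.succ.inj hj'))))

theorem mul_jordanMatrix_apply_zero (s : Σ i : Fin d, Fin (lam i)) (i : Fin d) (h : 0 < lam i) :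
    (Y * jordanMatrix K lam) s ⟨i, ⟨0, h⟩⟩ = 0 := by
  simp [mul_apply, jordanMatrix]

theorem jordanMatrix_mul_apply_of_succ_lt (t : Σ i : Fin d, Fin (lam i)) (i : Fin d) (j : ℕ)
    (hj : j + 1 < lam i) :
    (jordanMatrix K lam * Y) ⟨i, ⟨j, by omega⟩⟩ t = Y ⟨i, ⟨j + 1, hj⟩⟩ t := by
  rw [mul_apply, Fintype.sum_eq_single ⟨i, ⟨j + 1, hj⟩⟩]
  · simp [jordanMatrix]
  · rintro ⟨i', j'⟩ hne
    simp only [jordanMatrix, of_apply]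
    rw [if_neg, zero_mul]
    rintro ⟨rfl, hj'⟩
    exact hne (Sigma.ext rfl (heq_of_eq (Fin.ext hj'.symm)))

theorem jordanMatrix_mul_apply_last (t : Σ i : Fin d, Fin (lam i)) (i : Fin d) (h : 0 < lam i) :
    (jordanMatrix K lam * Y) ⟨i, ⟨lam i - 1, by omega⟩⟩ t = 0 := by
  refine Finset.sum_eq_zero fun u _ => ?_
  simp only [jordanMatrix, of_apply]
  rw [if_neg, zero_mul]
  rintro ⟨rfl, hu⟩
  have := u.2.isLt
  omega

variable {Y} (hY : Commute Y (jordanMatrix K lam))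
include hY

theorem apply_eq_apply_add_of_commute (i i' : Fin d) (j j' k : ℕ) (hj : j + k < lam i)
    (hj' : j' + k < lam i') :
    Y ⟨i, ⟨j, by omega⟩⟩ ⟨i', ⟨j', by omega⟩⟩ = Y ⟨i, ⟨j + k, hj⟩⟩ ⟨i', ⟨j' + k, hj'⟩⟩ := by
  induction k with
  | zero => rfl
  | succ k ih =>
    rw [ih (by omega) (by omega), ← mul_jordanMatrix_apply_succ Y _ i' (j' + k) hj', hY.eq,
      jordanMatrix_mul_apply_of_succ_lt Y _ i (j + k) hj]
    rfl

theorem apply_eq_zero_of_snd_lt_of_commute (s t : Σ i : Fin d, Fin (lam i))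
    (h : (t.2 : ℕ) < s.2) : Y s t = 0 := by
  obtain ⟨i, ⟨j, hj⟩⟩ := s
  obtain ⟨i', ⟨j', hj'⟩⟩ := t
  obtain ⟨c, rfl⟩ : ∃ c, j = c + 1 + j' := ⟨j - 1 - j', by simp only at h; omega⟩
  have hshift := apply_eq_apply_add_of_commute hY i i' (c + 1) 0 j' hj (by omega)
  simp only [zero_add] at hshift
  rw [← hshift, ← jordanMatrix_mul_apply_of_succ_lt Y _ i c (by omega), ← hY.eq,
    mul_jordanMatrix_apply_zero]

theorem apply_eq_zero_of_sub_lt_sub_of_commute (s t : Σ i : Fin d, Fin (lam i))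
    (h : lam s.1 - s.2 < lam t.1 - t.2) : Y s t = 0 := by
  obtain ⟨i, ⟨j, hj⟩⟩ := s
  obtain ⟨i', ⟨j', hj'⟩⟩ := t
  simp only at h
  have hlast : ∀ c (hc : c + 1 < lam i'), Y ⟨i, ⟨lam i - 1, by omega⟩⟩ ⟨i', ⟨c, by omega⟩⟩ = 0 :=
    fun c hc => by
      rw [← mul_jordanMatrix_apply_succ Y _ i' c hc, hY.eq,
        jordanMatrix_mul_apply_last Y _ i (by omega)]
  rw [apply_eq_apply_add_of_commute hY i i' j j' (lam i - 1 - j) (by omega) (by omega)]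
  convert hlast (j' + (lam i - 1 - j)) (by omega) using 4
  omega

theorem apply_eq_apply_zero_of_snd_eq_of_commute (s t : Σ i : Fin d, Fin (lam i))
    (h : (s.2 : ℕ) = t.2) :
    Y s t = Y ⟨s.1, ⟨0, s.2.pos⟩⟩ ⟨t.1, ⟨0, t.2.pos⟩⟩ := by
  obtain ⟨i, ⟨j, hj⟩⟩ := s
  obtain ⟨i', ⟨j', hj'⟩⟩ := t
  obtain rfl : j = j' := h
  simpa using (apply_eq_apply_add_of_commute hY i i' 0 0 j (by omega) (by omega)).symm

end JordanCommutant

section JordanLevel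

variable {d : ℕ} (lam : Fin d → ℕ)

def jordanLevel (s : Σ i : Fin d, Fin (lam i)) : ℕ ×ₗ ℕᵒᵈ :=
  toLex ((s.2 : ℕ), OrderDual.toDual (lam s.1 - s.2))

variable {lam}

theorem jordanLevel_eq_iff {s t : Σ i : Fin d, Fin (lam i)} :
    jordanLevel lam s = jordanLevel lam t ↔ (s.2 : ℕ) = t.2 ∧ lam s.1 = lam t.1 := by
  have := s.2.isLt
  have := t.2.isLt
  simp only [jordanLevel, toLex_inj, Prod.mk.injEq, OrderDual.toDual_inj]
  omega

theorem blockTriangular_jordanLevel {K : Type} [Field K]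
    {Y : Matrix (Σ i : Fin d, Fin (lam i)) (Σ i : Fin d, Fin (lam i)) K}
    (hY : Commute Y (jordanMatrix K lam)) :
    Y.BlockTriangular (jordanLevel lam) := by
  intro s t hlt
  rcases Prod.Lex.lt_iff.mp hlt with h | ⟨-, h⟩
  · exact apply_eq_zero_of_snd_lt_of_commute hY s t h
  · exact apply_eq_zero_of_sub_lt_sub_of_commute hY s t h

def jordanLevelFiberEquiv (s₀ : Σ i : Fin d, Fin (lam i)) :
    {s // jordanLevel lam s = jordanLevel lam s₀} ≃ {i : Fin d // lam i = lam s₀.1} where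
  toFun s := ⟨s.1.1, (jordanLevel_eq_iff.mp s.2).2⟩
  invFun i := ⟨⟨i.1, ⟨s₀.2, by rw [i.2]; exact s₀.2.isLt⟩⟩, jordanLevel_eq_iff.mpr ⟨rfl, i.2⟩⟩
  left_inv := by
    rintro ⟨⟨i, j⟩, hs⟩
    obtain ⟨hj, -⟩ := jordanLevel_eq_iff.mp hs
    exact Subtype.ext (Sigma.ext rfl (heq_of_eq (Fin.ext hj.symm)))
  right_inv _ := rfl

theorem toSquareBlock_jordanLevel {K : Type} [Field K] (hpos : ∀ i, 1 ≤ lam i)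
    {Y : Matrix (Σ i : Fin d, Fin (lam i)) (Σ i : Fin d, Fin (lam i)) K}
    (hY : Commute Y (jordanMatrix K lam)) (s₀ : Σ i : Fin d, Fin (lam i)) :
    Y.toSquareBlock (jordanLevel lam) (jordanLevel lam s₀) =
      reindex (jordanLevelFiberEquiv s₀).symm (jordanLevelFiberEquiv s₀).symm
        (prBlock lam hpos Y (lam s₀.1)) := by
  ext s t
  have hs := jordanLevel_eq_iff.mp s.2
  have ht := jordanLevel_eq_iff.mp t.2
  exact apply_eq_apply_zero_of_snd_eq_of_commute hY s t (hs.1.trans ht.1.symm)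

end JordanLevel

theorem nilpotent_iff_blocks_nilpotent_of_commutes_with_jordan_general
    {K : Type} [Field K] (d : ℕ) (lam : Fin d → ℕ)
    (hpos : ∀ i, 1 ≤ lam i)
    (Y : Matrix (Σ i : Fin d, Fin (lam i)) (Σ i : Fin d, Fin (lam i)) K)
    (hY : Y * jordanMatrix K lam = jordanMatrix K lam * Y) :
    IsNilpotent Y ↔
      ∀ ℓ : ℕ, 1 ≤ ℓ → (∃ i : Fin d, lam i = ℓ) →
        IsNilpotent (prBlock lam hpos Y ℓ) := by
  have hblock (s₀ : Σ i : Fin d, Fin (lam i)) :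
      IsNilpotent (Y.toSquareBlock (jordanLevel lam) (jordanLevel lam s₀)) ↔
        IsNilpotent (prBlock lam hpos Y (lam s₀.1)) := by
    rw [toSquareBlock_jordanLevel hpos hY]
    exact IsNilpotent.map_iff (f := reindexAlgEquiv K K _) (reindexAlgEquiv K K _).injective
  rw [(blockTriangular_jordanLevel hY).isNilpotent_iff]
  constructor
  · rintro h _ - ⟨i, rfl⟩
    exact (hblock ⟨i, ⟨0, hpos i⟩⟩).mp (h _)
  · exact fun h s₀ => (hblock s₀).mpr (h _ (hpos s₀.1) ⟨s₀.1, rfl⟩)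

/-- Let `Y` commute with the Jordan matrix `X_λ`.  Then `Y` is
nilpotent iff, for every `ℓ ≥ 1` occurring as a part of `λ`, the extracted
matrix `Y(ℓ)` is nilpotent. -/
theorem nilpotent_iff_blocks_nilpotent_of_commutes_with_jordan
    {K : Type} [Field K] [IsAlgClosed K] (n d : ℕ) (lam : Fin d → ℕ)
    (hpos : ∀ i, 1 ≤ lam i) (hanti : Antitone lam) (hsum : ∑ i, lam i = n)
    (Y : Matrix (Σ i : Fin d, Fin (lam i)) (Σ i : Fin d, Fin (lam i)) K)
    (hY : Y * jordanMatrix K lam = jordanMatrix K lam * Y) :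
    IsNilpotent Y ↔
      ∀ ℓ : ℕ, 1 ≤ ℓ → (∃ i : Fin d, lam i = ℓ) →
        IsNilpotent (prBlock lam hpos Y ℓ) :=
  nilpotent_iff_blocks_nilpotent_of_commutes_with_jordan_general d lam hpos Y hY
end

section
/- Let X, Y ∈ M_n(K) with XY = YX, and let v_1, v_2 ∈ K^n both be cyclic vectors for the pair (X,Y). Then there exists g ∈ GL_n(K) with gXg⁻¹ = X, gYg⁻¹ = Y, gv_1 = v_2, and such that g stabilizes every linear subspace of K^n that is stable under both X and Y. In particular, if X, Y ∈ p_{k,n} (resp. X, Y ∈ q_{k,n}) then g ∈ P_{k,n} (resp. g ∈ Q_{k,n}), so (X,Y,v_1) and (X,Y,v_2) lie in the same P_{k,n}-orbit (resp. Q_{k,n}-orbit). -/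
/-- `v` is a cyclic vector for the commuting pair `(X, Y)`: the vectors
`X^a Y^b v` span `K^n`. -/
def IsCyclicVector {K : Type} [Field K] {n : ℕ}
    (X Y : Matrix (Fin n) (Fin n) K) (v : Fin n → K) : Prop :=
  Submodule.span K
    {w : Fin n → K | ∃ a b : ℕ, w = (X ^ a * Y ^ b).mulVec v} = ⊤

/-!
Write `v₂ = M v₁` with `M` in the algebra generated by `X` and `Y`, which is possible because
`v₁` is cyclic. Being a polynomial in `X` and `Y`, `M` commutes with both and stabilizes every
subspace stable under both. It maps `X^a Y^b v₁` to `X^a Y^b v₂`, so its image contains a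
spanning set; hence `M` is invertible and `g = M` works.
-/

open scoped Matrix

namespace Matrix

theorem mulVec_mem_of_mem_adjoin {ι R : Type*} [Fintype ι] [DecidableEq ι] [CommSemiring R]
    {s : Set (Matrix ι ι R)} {M : Matrix ι ι R} (hM : M ∈ Algebra.adjoin R s)
    {W : Submodule R (ι → R)} (hW : ∀ A ∈ s, ∀ w ∈ W, A *ᵥ w ∈ W) :
    ∀ w ∈ W, M *ᵥ w ∈ W := by
  induction hM using Algebra.adjoin_induction with
  | mem A hA => exact hW A hA
  | algebraMap r =>
    intro w hw
    rw [Algebra.algebraMap_eq_smul_one, smul_mulVec, one_mulVec]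
    exact W.smul_mem r hw
  | add A B _ _ hA hB =>
    intro w hw
    rw [add_mulVec]
    exact W.add_mem (hA w hw) (hB w hw)
  | mul A B _ _ hA hB =>
    intro w hw
    rw [← mulVec_mulVec]
    exact hA _ (hB w hw)

end Matrix

section Cyclic

variable {K : Type} [Field K] {n : ℕ} {X Y : Matrix (Fin n) (Fin n) K}

theorem IsCyclicVector.exists_mem_adjoin_mulVec_eq {v : Fin n → K} (hv : IsCyclicVector X Y v)
    (u : Fin n → K) : ∃ M ∈ Algebra.adjoin K {X, Y}, M *ᵥ v = u := by
  have hu : u ∈ Submodule.span K {w | ∃ a b : ℕ, w = (X ^ a * Y ^ b) *ᵥ v} := by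
    rw [hv]; trivial
  induction hu using Submodule.span_induction with
  | mem w hw =>
    obtain ⟨a, b, rfl⟩ := hw
    refine ⟨X ^ a * Y ^ b, mul_mem (pow_mem ?_ a) (pow_mem ?_ b), rfl⟩ <;>
      exact Algebra.subset_adjoin (by simp)
  | zero => exact ⟨0, zero_mem _, Matrix.zero_mulVec v⟩
  | add w w' _ _ hw hw' =>
    obtain ⟨M, hM, rfl⟩ := hw
    obtain ⟨M', hM', rfl⟩ := hw'
    exact ⟨M + M', add_mem hM hM', Matrix.add_mulVec M M' v⟩
  | smul c w _ hw =>
    obtain ⟨M, hM, rfl⟩ := hw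
    exact ⟨c • M, Subalgebra.smul_mem _ hM c, Matrix.smul_mulVec c M v⟩

theorem isUnit_of_isCyclicVector_mulVec {M : Matrix (Fin n) (Fin n) K} (hX : Commute M X)
    (hY : Commute M Y) {v : Fin n → K} (hMv : IsCyclicVector X Y (M *ᵥ v)) : IsUnit M := by
  refine Matrix.mulVec_surjective_iff_isUnit.mp fun u => ?_
  have hrange : LinearMap.range M.mulVecLin = ⊤ := by
    rw [eq_top_iff, ← hMv, Submodule.span_le]
    rintro _ ⟨a, b, rfl⟩
    refine ⟨(X ^ a * Y ^ b) *ᵥ v, ?_⟩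
    rw [Matrix.mulVecLin_apply, Matrix.mulVec_mulVec,
      ((hX.pow_right a).mul_right (hY.pow_right b)).eq, ← Matrix.mulVec_mulVec]
  exact LinearMap.range_eq_top.mp hrange u

end Cyclic

theorem cyclic_triples_same_orbit_general
    {K : Type} [Field K] {n : ℕ}
    (X Y : Matrix (Fin n) (Fin n) K) (hcomm : X * Y = Y * X)
    (v₁ v₂ : Fin n → K)
    (hv₁ : IsCyclicVector X Y v₁) (hv₂ : IsCyclicVector X Y v₂) :
    ∃ g : Matrix.GeneralLinearGroup (Fin n) K,
      (g : Matrix (Fin n) (Fin n) K) * X *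
          ((g⁻¹ : Matrix.GeneralLinearGroup (Fin n) K) : Matrix (Fin n) (Fin n) K) = X ∧
      (g : Matrix (Fin n) (Fin n) K) * Y *
          ((g⁻¹ : Matrix.GeneralLinearGroup (Fin n) K) : Matrix (Fin n) (Fin n) K) = Y ∧
      (g : Matrix (Fin n) (Fin n) K).mulVec v₁ = v₂ ∧
      ∀ W : Submodule K (Fin n → K),
        (∀ w ∈ W, X.mulVec w ∈ W) → (∀ w ∈ W, Y.mulVec w ∈ W) →
        ∀ w ∈ W, (g : Matrix (Fin n) (Fin n) K).mulVec w ∈ W := by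
  obtain ⟨M, hM, rfl⟩ := hv₁.exists_mem_adjoin_mulVec_eq v₂
  have hXY : Commute X Y := hcomm
  have hMX : Commute M X :=
    (Algebra.commute_of_mem_adjoin_of_forall_mem_commute hM (by simpa using hXY)).symm
  have hMY : Commute M Y :=
    (Algebra.commute_of_mem_adjoin_of_forall_mem_commute hM (by simpa using hXY.symm)).symm
  have hM_unit := isUnit_of_isCyclicVector_mulVec hMX hMY hv₂
  refine ⟨hM_unit.unit, (Units.mul_inv_eq_iff_eq_mul _).mpr hMX.eq,
    (Units.mul_inv_eq_iff_eq_mul _).mpr hMY.eq, rfl, fun W hX hY => ?_⟩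
  refine Matrix.mulVec_mem_of_mem_adjoin hM ?_
  rintro A (rfl | rfl)
  exacts [hX, hY]

/-- Let `X, Y ∈ M_n(K)` commute and let `v₁, v₂` both be cyclic
vectors for `(X, Y)`.  Then there is `g ∈ GL_n(K)` with `gXg⁻¹ = X`,
`gYg⁻¹ = Y`, `g v₁ = v₂`, stabilizing every linear subspace of `K^n` stable
under both `X` and `Y`.  (In particular if `X, Y ∈ p_{k,n}`, resp. `q_{k,n}`,
then `g ∈ P_{k,n}`, resp. `Q_{k,n}`, so the two triples lie in the same
orbit.) -/
theorem cyclic_triples_same_orbit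
    {K : Type} [Field K] [IsAlgClosed K] {n : ℕ}
    (X Y : Matrix (Fin n) (Fin n) K) (hcomm : X * Y = Y * X)
    (v₁ v₂ : Fin n → K)
    (hv₁ : IsCyclicVector X Y v₁) (hv₂ : IsCyclicVector X Y v₂) :
    ∃ g : Matrix.GeneralLinearGroup (Fin n) K,
      (g : Matrix (Fin n) (Fin n) K) * X *
          ((g⁻¹ : Matrix.GeneralLinearGroup (Fin n) K) : Matrix (Fin n) (Fin n) K) = X ∧
      (g : Matrix (Fin n) (Fin n) K) * Y *
          ((g⁻¹ : Matrix.GeneralLinearGroup (Fin n) K) : Matrix (Fin n) (Fin n) K) = Y ∧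
      (g : Matrix (Fin n) (Fin n) K).mulVec v₁ = v₂ ∧
      ∀ W : Submodule K (Fin n → K),
        (∀ w ∈ W, X.mulVec w ∈ W) → (∀ w ∈ W, Y.mulVec w ∈ W) →
        ∀ w ∈ W, (g : Matrix (Fin n) (Fin n) K).mulVec w ∈ W :=
  cyclic_triples_same_orbit_general X Y hcomm v₁ v₂ hv₁ hv₂
end
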